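/- arXiv:2509.01698 — 3 statements merged into one kernel-verified Lean document; each statement's English description precedes it below -/
import Mathlib

section
/- Let G be a connected (bull, claw)-free finite graph. If G contains an odd antihole as an induced subgraph, then α(G) = 2. -/
open SimpleGraph Finset

/-- The cycle graph on `Fin p` (for `p ≥ 3` this is the cycle `C_p`). -/
def cycleG (p : ℕ) [NeZero p] : SimpleGraph (Fin p) where
  Adj i j := i ≠ j ∧ (i + 1 = j ∨ j + 1 = i)
  symm := by
    constructor
    rintro i j ⟨h, h'⟩
    exact ⟨h.symm, h'.symm⟩
  loopless := by
    constructor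
    rintro i ⟨h, _⟩
    exact h rfl

/-- The clique expansion `C_p[k 0, …, k (p-1)]` of the cycle `C_p`:
vertices of the cycle are replaced by cliques of the prescribed sizes, and
all edges are added between cyclically consecutive cliques. -/
def cliqueExpansion (p : ℕ) [NeZero p] (k : Fin p → ℕ) : SimpleGraph (Σ i : Fin p, Fin (k i)) where
  Adj a b := a ≠ b ∧ (a.1 = b.1 ∨ a.1 + 1 = b.1 ∨ b.1 + 1 = a.1)
  symm := by
    constructor
    rintro a b ⟨h, h'⟩
    refine ⟨h.symm, ?_⟩
    rcases h' with h' | h' | h'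
    · exact Or.inl h'.symm
    · exact Or.inr (Or.inr h')
    · exact Or.inr (Or.inl h')
  loopless := by
    constructor
    rintro a ⟨h, _⟩
    exact h rfl

/-- The join `G ⊕ H` of two graphs: disjoint union plus all edges in between. -/
def joinG {α β : Type*} (G : SimpleGraph α) (H : SimpleGraph β) : SimpleGraph (α ⊕ β) where
  Adj x y :=
    match x, y with
    | Sum.inl a, Sum.inl b => G.Adj a b
    | Sum.inr a, Sum.inr b => H.Adj a b
    | _, _ => True
  symm := by
    constructor
    rintro (a | a) (b | b) h
    · exact G.adj_symm h
    · trivial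
    · trivial
    · exact H.adj_symm h
  loopless := by
    constructor
    rintro (a | a) h
    · exact G.loopless.irrefl a h
    · exact H.loopless.irrefl a h

/-- The bull: a triangle with two pendant edges. -/
def bull : SimpleGraph (Fin 5) :=
  SimpleGraph.fromRel (fun a b =>
    (a = 0 ∧ b = 1) ∨ (a = 1 ∧ b = 2) ∨ (a = 2 ∧ b = 3) ∨ (a = 3 ∧ b = 4) ∨ (a = 1 ∧ b = 3))

/-- The claw `K_{1,3}`. -/
def claw : SimpleGraph (Fin 4) :=
  SimpleGraph.fromRel (fun a b => a = 0 ∧ b ≠ 0)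

/-- The chair: the claw with one edge subdivided once. -/
def chair : SimpleGraph (Fin 5) :=
  SimpleGraph.fromRel (fun a b =>
    (a = 0 ∧ b = 1) ∨ (a = 0 ∧ b = 2) ∨ (a = 0 ∧ b = 3) ∨ (a = 3 ∧ b = 4))

/-- `G` contains `H` as a (not necessarily induced) subgraph. -/
def ContainsSub {V W : Type*} (G : SimpleGraph V) (H : SimpleGraph W) : Prop :=
  ∃ f : H →g G, Function.Injective f

/-- The independence number of a finite graph. -/
noncomputable def indepNum {V : Type*} [Fintype V] (G : SimpleGraph V) : ℕ :=
  sSup {n | ∃ s : Finset V, s.card = n ∧ ∀ a ∈ s, ∀ b ∈ s, a ≠ b → ¬ G.Adj a b}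

/-- Clique sizes of the spindle graph `M_{3i+1} = C_{2i+1}[2,1,2,1,…,2,1,1]`. -/
def spindleKs (i : ℕ) : Fin (2 * i + 1) → ℕ :=
  fun j => if j.val % 2 = 0 ∧ j.val < 2 * i then 2 else 1

/-- Clique sizes `[2,…,2,1,3,1,3,1,…,3,1]`: `a` copies of `2`, then a `1`,
then alternating `3,1`-pairs up to length `p`. -/
def patternKs (p a : ℕ) : Fin p → ℕ :=
  fun j => if j.val < a then 2 else if (j.val - a) % 2 = 0 then 1 else 3

/-!
Write `e` for the odd antihole, whose non-edges are the pairs `e j`, `e (j + 1)`. Claw- and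
bull-freeness force a vertex outside the antihole that has a neighbour in it to be adjacent to an
end of every non-edge, and connectivity then gives every vertex such a neighbour. So the closed
neighbourhood of every vertex meets every non-edge; as `p` is odd, the closed neighbourhoods of two
vertices then meet in some `e j`, since otherwise membership in one of them would alternate around
the odd cycle. For an independent triple `x, y, z`, the common neighbours `e a` of `x, y`,
`e b` of `x, z` and `e c` of `y, z` are distinct by claw-freeness and pairwise non-adjacent by
bull-freeness: an independent triple in the antihole, which has none.
-/

open Fin.NatCast Fin.CommRing

section InducedPatterns

variable {V : Type*} {G : SimpleGraph V}

lemma nonempty_claw_embedding {c a b d : V} (hca : G.Adj c a) (hcb : G.Adj c b) (hcd : G.Adj c d)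
    (hab : ¬ G.Adj a b) (had : ¬ G.Adj a d) (hbd : ¬ G.Adj b d)
    (hab' : a ≠ b) (had' : a ≠ d) (hbd' : b ≠ d) : Nonempty (claw ↪g G) := by
  have := hca.ne; have := hcb.ne; have := hcd.ne
  have hinj : Function.Injective ![c, a, b, d] := by
    intro i j h
    fin_cases i <;> fin_cases j <;> simp_all
  have hadj : ∀ i j, G.Adj (![c, a, b, d] i) (![c, a, b, d] j) ↔ claw.Adj i j := by
    intro i j
    fin_cases i <;> fin_cases j <;> simp_all [claw, adj_comm]
  exact ⟨⟨⟨_, hinj⟩, hadj _ _⟩⟩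

lemma nonempty_bull_embedding {v₀ v₁ v₂ v₃ v₄ : V} (h01 : G.Adj v₀ v₁) (h12 : G.Adj v₁ v₂)
    (h23 : G.Adj v₂ v₃) (h34 : G.Adj v₃ v₄) (h13 : G.Adj v₁ v₃) (h02 : ¬ G.Adj v₀ v₂)
    (h03 : ¬ G.Adj v₀ v₃) (h04 : ¬ G.Adj v₀ v₄) (h14 : ¬ G.Adj v₁ v₄) (h24 : ¬ G.Adj v₂ v₄) :
    Nonempty (bull ↪g G) := by
  have := h01.ne; have := h12.ne; have := h23.ne; have := h34.ne; have := h13.ne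
  have : v₀ ≠ v₂ := by rintro rfl; exact h03 h23
  have : v₀ ≠ v₃ := by rintro rfl; exact h02 h23.symm
  have : v₀ ≠ v₄ := by rintro rfl; exact h14 h01.symm
  have : v₁ ≠ v₄ := by rintro rfl; exact h04 h01
  have : v₂ ≠ v₄ := by rintro rfl; exact h14 h12
  have hinj : Function.Injective ![v₀, v₁, v₂, v₃, v₄] := by
    intro i j h
    fin_cases i <;> fin_cases j <;> simp_all
  have hadj : ∀ i j, G.Adj (![v₀, v₁, v₂, v₃, v₄] i) (![v₀, v₁, v₂, v₃, v₄] j) ↔ bull.Adj i j := by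
    intro i j
    fin_cases i <;> fin_cases j <;> simp_all [bull, adj_comm]
  exact ⟨⟨⟨_, hinj⟩, hadj _ _⟩⟩

end InducedPatterns

lemma indepNum_eq_two {V : Type*} [Fintype V] {G : SimpleGraph V} {a b : V} (hab : a ≠ b)
    (hnab : ¬ G.Adj a b)
    (h3 : ∀ x y z, x ≠ y → x ≠ z → y ≠ z → ¬ G.Adj x y → ¬ G.Adj x z → ¬ G.Adj y z → False) :
    _root_.indepNum G = 2 := by
  classical
  set S := {n | ∃ s : Finset V, s.card = n ∧ ∀ a ∈ s, ∀ b ∈ s, a ≠ b → ¬ G.Adj a b}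
  have h2S : 2 ∈ S := by
    refine ⟨{a, b}, card_pair hab, ?_⟩
    simp only [mem_insert, mem_singleton]
    rintro x (rfl | rfl) y (rfl | rfl) hxy
    exacts [absurd rfl hxy, hnab, fun h => hnab h.symm, absurd rfl hxy]
  have hS : ∀ n ∈ S, n ≤ 2 := by
    rintro _ ⟨s, rfl, hs⟩
    by_contra! hlt
    obtain ⟨x, hx, y, hy, z, hz, hxy, hxz, hyz⟩ := two_lt_card.1 hlt
    exact h3 x y z hxy hxz hyz (hs x hx y hy hxy) (hs x hx z hz hxz) (hs y hy z hz hyz)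
  exact le_antisymm (csSup_le ⟨2, h2S⟩ hS) (le_csSup ⟨2, hS⟩ h2S)

namespace Fin

variable {p : ℕ} [NeZero p]

lemma not_forall_apply_add_one_iff_not (hp : Odd p) (f : Fin p → Prop) :
    ¬ ∀ j, (f (j + 1) ↔ ¬ f j) := by
  intro h
  have hshift : ∀ n : ℕ, ∀ j, (f (j + n) ↔ (f j ↔ Even n)) := by
    intro n
    induction n with
    | zero => simp
    | succ n ih =>
      intro j
      rw [Nat.cast_succ, ← add_assoc, h, ih, Nat.even_add_one]
      tauto
  simpa [Nat.not_even_iff_odd.2 hp] using hshift p 0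

lemma exists_and_of_forall_or_add_one (hp : Odd p) {f g : Fin p → Prop}
    (hf : ∀ j, f j ∨ f (j + 1)) (hg : ∀ j, g j ∨ g (j + 1)) : ∃ j, f j ∧ g j := by
  by_contra! h
  refine not_forall_apply_add_one_iff_not hp f fun j => ⟨fun hf1 hf0 => ?_, (hf j).resolve_left⟩
  exact h (j + 1) hf1 ((hg j).resolve_left (h j hf0))

lemma one_two_three_four_ne_zero (hp : 5 ≤ p) :
    (1 : Fin p) ≠ 0 ∧ (2 : Fin p) ≠ 0 ∧ (3 : Fin p) ≠ 0 ∧ (4 : Fin p) ≠ 0 := by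
  have h : ∀ n : ℕ, 0 < n → n < 5 → (n : Fin p) ≠ 0 := fun n hn0 hn5 hn => by
    rw [natCast_eq_zero] at hn
    exact absurd (Nat.le_of_dvd hn0 hn) (by omega)
  exact ⟨by exact_mod_cast h 1 (by norm_num) (by norm_num),
    by exact_mod_cast h 2 (by norm_num) (by norm_num),
    by exact_mod_cast h 3 (by norm_num) (by norm_num),
    by exact_mod_cast h 4 (by norm_num) (by norm_num)⟩

end Fin

section Antihole

variable {V : Type*} {G : SimpleGraph V} {p : ℕ} [NeZero p] (e : (cycleG p)ᶜ ↪g G)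

lemma antihole_adj_iff (i j : Fin p) : G.Adj (e i) (e j) ↔ i ≠ j ∧ i + 1 ≠ j ∧ j + 1 ≠ i := by
  rw [e.map_adj_iff, compl_adj]
  simp only [cycleG]
  tauto

lemma antihole_not_adj_add_one (i : Fin p) : ¬ G.Adj (e i) (e (i + 1)) :=
  fun h => ((antihole_adj_iff e _ _).1 h).2.1 rfl

variable (hp : 5 ≤ p)
include hp

lemma antihole_adj_add_two (i : Fin p) : G.Adj (e i) (e (i + 2)) := by
  obtain ⟨h1, h2, h3, -⟩ := Fin.one_two_three_four_ne_zero hp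
  refine (antihole_adj_iff e _ _).2 ⟨fun h => h2 ?_, fun h => h1 ?_, fun h => h3 ?_⟩
  exacts [by linear_combination -h, by linear_combination -h, by linear_combination h]

lemma antihole_adj_add_three (i : Fin p) : G.Adj (e i) (e (i + 3)) := by
  obtain ⟨-, h2, h3, h4⟩ := Fin.one_two_three_four_ne_zero hp
  refine (antihole_adj_iff e _ _).2 ⟨fun h => h3 ?_, fun h => h2 ?_, fun h => h4 ?_⟩
  exacts [by linear_combination -h, by linear_combination -h, by linear_combination h]

lemma antihole_not_indep_triple {a b c : Fin p} (hab : a ≠ b) (hac : a ≠ c) (hbc : b ≠ c)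
    (hnab : ¬ G.Adj (e a) (e b)) (hnac : ¬ G.Adj (e a) (e c)) (hnbc : ¬ G.Adj (e b) (e c)) :
    False := by
  rw [antihole_adj_iff] at hnab hnac
  have hb : a + 1 = b ∨ b + 1 = a := by tauto
  have hc : a + 1 = c ∨ c + 1 = a := by tauto
  rcases hb with hb | hb <;> rcases hc with hc | hc
  · exact hbc (by linear_combination hc - hb)
  · obtain rfl : b = c + 2 := by linear_combination -hb - hc
    exact hnbc (antihole_adj_add_two e hp c).symm
  · obtain rfl : c = b + 2 := by linear_combination -hb - hc
    exact hnbc (antihole_adj_add_two e hp b)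
  · exact hbc (by linear_combination hb - hc)

lemma antihole_adj_or_eq_or_adj_or_eq_add_one (k j : Fin p) :
    (G.Adj (e k) (e j) ∨ e k = e j) ∨ (G.Adj (e k) (e (j + 1)) ∨ e k = e (j + 1)) := by
  by_contra! h
  obtain ⟨⟨hj, hkj⟩, hj1, hkj1⟩ := h
  rw [e.injective.ne_iff] at hkj hkj1
  obtain rfl : k + 1 = j := by
    by_contra hk
    exact hj ((antihole_adj_iff e _ _).2 ⟨hkj, hk, hkj1.symm⟩)
  exact hj1 (by convert antihole_adj_add_two e hp k using 2; ring)

lemma antihole_ne_add_one (j : Fin p) : e j ≠ e (j + 1) :=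
  e.injective.ne fun h => (Fin.one_two_three_four_ne_zero hp).1 (by linear_combination -h)

variable (hclaw : ¬ Nonempty (claw ↪g G))
include hclaw

lemma add_one_eq_or_eq_add_two_of_adj {u : V} (hu : u ∉ Set.range e) {i j : Fin p}
    (hj : ¬ G.Adj u (e j)) (hj1 : ¬ G.Adj u (e (j + 1))) (hi : G.Adj u (e i)) :
    i + 1 = j ∨ i = j + 2 := by
  by_contra! h
  have hij : i ≠ j := by rintro rfl; exact hj hi
  have hij1 : i ≠ j + 1 := by rintro rfl; exact hj1 hi
  exact hclaw (nonempty_claw_embedding hi.symm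
    ((antihole_adj_iff e _ _).2 ⟨hij, h.1, fun h' => hij1 h'.symm⟩)
    ((antihole_adj_iff e _ _).2
      ⟨hij1, fun h' => hij (add_right_cancel h'), fun h' => h.2 (by linear_combination -h')⟩)
    hj hj1 (antihole_not_adj_add_one e j) (fun h' => hu ⟨j, h'.symm⟩)
    (fun h' => hu ⟨j + 1, h'.symm⟩) (antihole_ne_add_one e hp j))

variable (hbull : ¬ Nonempty (bull ↪g G))
include hbull

/-- The claw at `e i` puts `i` at `j - 1` or `j + 2`; then both are neighbours of `u`, and
`e (j + 1) - e (j - 1) - u - e (j + 2) - e j` is a bull. -/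
lemma adj_or_adj_add_one_of_adj {u : V} (hu : u ∉ Set.range e) {i : Fin p}
    (hi : G.Adj u (e i)) (j : Fin p) : G.Adj u (e j) ∨ G.Adj u (e (j + 1)) := by
  by_contra! h
  obtain ⟨hj, hj1⟩ := h
  obtain ⟨h1, h2, -, h4⟩ := Fin.one_two_three_four_ne_zero hp
  have hi' := add_one_eq_or_eq_add_two_of_adj e hp hclaw hu hj hj1 hi
  have hprev : G.Adj u (e (j - 1)) := by
    by_contra hprev
    have hj' : ¬ G.Adj u (e (j - 1 + 1)) := by rwa [sub_add_cancel]
    rcases hi' with hi' | hi' <;>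
      rcases add_one_eq_or_eq_add_two_of_adj e hp hclaw hu hprev hj' hi with hi'' | hi''
    exacts [h1 (by linear_combination hi'' - hi'), h2 (by linear_combination hi' - hi''),
      h4 (by linear_combination hi'' - hi'), h1 (by linear_combination hi'' - hi')]
  have hnext : G.Adj u (e (j + 2)) := by
    by_contra hnext
    have hj2 : ¬ G.Adj u (e (j + 1 + 1)) := by rwa [add_assoc, one_add_one_eq_two]
    rcases hi' with hi' | hi' <;>
      rcases add_one_eq_or_eq_add_two_of_adj e hp hclaw hu hj1 hj2 hi with hi'' | hi''
    exacts [h1 (by linear_combination hi' - hi''), h4 (by linear_combination hi' - hi''),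
      h2 (by linear_combination hi'' - hi'), h1 (by linear_combination hi' - hi'')]
  have h01 : G.Adj (e (j + 1)) (e (j - 1)) := by
    convert (antihole_adj_add_two e hp (j - 1)).symm using 2; ring
  have h13 : G.Adj (e (j - 1)) (e (j + 2)) := by
    convert antihole_adj_add_three e hp (j - 1) using 2; ring
  have h03 : ¬ G.Adj (e (j + 1)) (e (j + 2)) := by
    convert antihole_not_adj_add_one e (j + 1) using 3; ring
  have h14 : ¬ G.Adj (e (j - 1)) (e j) := by
    convert antihole_not_adj_add_one e (j - 1) using 3; ring
  exact hbull (nonempty_bull_embedding h01 hprev.symm hnext (antihole_adj_add_two e hp j).symm h13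
    (fun h => hj1 h.symm) h03 (fun h => antihole_not_adj_add_one e j h.symm) h14 hj)

variable (hodd : Odd p)
include hodd

lemma exists_adj_adj_add_one {w : V} (hw : w ∈ Set.range e ∨ ∃ i, G.Adj w (e i)) :
    ∃ j, G.Adj w (e j) ∧ G.Adj w (e (j + 1)) := by
  by_cases hwe : w ∈ Set.range e
  · obtain ⟨k, rfl⟩ := hwe
    refine ⟨k + 2, antihole_adj_add_two e hp k, ?_⟩
    convert antihole_adj_add_three e hp k using 2; ring
  · obtain ⟨i, hi⟩ := hw.resolve_left hwe
    have hcover := adj_or_adj_add_one_of_adj e hp hclaw hbull hwe hi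
    exact Fin.exists_and_of_forall_or_add_one hodd hcover fun j => hcover (j + 1)

variable (hconn : G.Connected)
include hconn

/-- Otherwise, on a path from `u` to the antihole, the first vertex that sees the antihole has two
consecutive neighbours `e j`, `e (j + 1)`, which form a claw with its predecessor. -/
lemma exists_adj_of_notMem_range {u : V} (hu : u ∉ Set.range e) : ∃ i, G.Adj u (e i) := by
  by_contra! h
  obtain ⟨d, -, ⟨hv, hvA⟩, hw⟩ := (hconn.preconnected u (e 0)).some.exists_boundary_dart
    {v | v ∉ Set.range e ∧ ∀ i, ¬ G.Adj v (e i)} ⟨hu, h⟩ fun h0 => h0.1 ⟨0, rfl⟩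
  obtain ⟨j, hj, hj1⟩ := exists_adj_adj_add_one e hp hclaw hbull hodd (w := d.snd)
    (by simpa only [Set.mem_ofPred_eq, not_and_or, not_not, not_forall] using hw)
  exact hclaw (nonempty_claw_embedding d.adj.symm hj hj1 (hvA j) (hvA (j + 1))
    (antihole_not_adj_add_one e j) (fun h => hv ⟨j, h.symm⟩) (fun h => hv ⟨j + 1, h.symm⟩)
    (antihole_ne_add_one e hp j))

lemma adj_or_eq_or_adj_or_eq_add_one (v : V) (j : Fin p) :
    (G.Adj v (e j) ∨ v = e j) ∨ (G.Adj v (e (j + 1)) ∨ v = e (j + 1)) := by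
  by_cases hv : v ∈ Set.range e
  · obtain ⟨k, rfl⟩ := hv
    exact antihole_adj_or_eq_or_adj_or_eq_add_one e hp k j
  · obtain ⟨i, hi⟩ := exists_adj_of_notMem_range e hp hclaw hbull hodd hconn hv
    exact (adj_or_adj_add_one_of_adj e hp hclaw hbull hv hi j).imp Or.inl Or.inl

lemma exists_adj_adj_of_not_adj {x y : V} (hne : x ≠ y) (hxy : ¬ G.Adj x y) :
    ∃ j, G.Adj x (e j) ∧ G.Adj y (e j) := by
  obtain ⟨j, hx, hy⟩ := Fin.exists_and_of_forall_or_add_one hodd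
    (adj_or_eq_or_adj_or_eq_add_one e hp hclaw hbull hodd hconn x)
    (adj_or_eq_or_adj_or_eq_add_one e hp hclaw hbull hodd hconn y)
  refine ⟨j, hx.resolve_right ?_, hy.resolve_right ?_⟩
  · rintro rfl
    rcases hy with hy | rfl
    exacts [hxy hy.symm, hne rfl]
  · rintro rfl
    rcases hx with hx | rfl
    exacts [hxy hx, hne rfl]

include e in
lemma not_indep_triple {x y z : V} (hxy : x ≠ y) (hxz : x ≠ z) (hyz : y ≠ z)
    (nxy : ¬ G.Adj x y) (nxz : ¬ G.Adj x z) (nyz : ¬ G.Adj y z) : False := by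
  obtain ⟨a, hxa, hya⟩ := exists_adj_adj_of_not_adj e hp hclaw hbull hodd hconn hxy nxy
  obtain ⟨b, hxb, hzb⟩ := exists_adj_adj_of_not_adj e hp hclaw hbull hodd hconn hxz nxz
  obtain ⟨c, hyc, hzc⟩ := exists_adj_adj_of_not_adj e hp hclaw hbull hodd hconn hyz nyz
  have hza : ¬ G.Adj z (e a) := fun h =>
    hclaw (nonempty_claw_embedding hxa.symm hya.symm h.symm nxy nxz nyz hxy hxz hyz)
  have hyb : ¬ G.Adj y (e b) := fun h =>
    hclaw (nonempty_claw_embedding hxb.symm h.symm hzb.symm nxy nxz nyz hxy hxz hyz)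
  have hxc : ¬ G.Adj x (e c) := fun h =>
    hclaw (nonempty_claw_embedding h.symm hyc.symm hzc.symm nxy nxz nyz hxy hxz hyz)
  have hab : ¬ G.Adj (e a) (e b) := fun h => hbull (nonempty_bull_embedding hya hxa.symm hxb
    hzb.symm h (fun h' => nxy h'.symm) hyb nyz (fun h' => hza h'.symm) nxz)
  have hac : ¬ G.Adj (e a) (e c) := fun h => hbull (nonempty_bull_embedding hxa hya.symm hyc
    hzc.symm h nxy hxc nxz (fun h' => hza h'.symm) nyz)
  have hbc : ¬ G.Adj (e b) (e c) := fun h => hbull (nonempty_bull_embedding hxb hzb.symm hzc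
    hyc.symm h nxz hxc nxy (fun h' => hyb h'.symm) (fun h' => nyz h'.symm))
  refine antihole_not_indep_triple e hp ?_ ?_ ?_ hab hac hbc
  · rintro rfl; exact hyb hya
  · rintro rfl; exact hza hzc
  · rintro rfl; exact hxc hxb

end Antihole

theorem bull_claw_free_oddAntihole_indepNum {V : Type*} [Fintype V] (G : SimpleGraph V)
    (hconn : G.Connected)
    (hbull : ¬ Nonempty (bull ↪g G)) (hclaw : ¬ Nonempty (claw ↪g G))
    (hanti : ∃ p : ℕ, ∃ _ : NeZero p, Odd p ∧ 5 ≤ p ∧ Nonempty ((cycleG p)ᶜ ↪g G)) :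
    _root_.indepNum G = 2 := by
  obtain ⟨p, _, hodd, hp, ⟨e⟩⟩ := hanti
  refine indepNum_eq_two (a := e 0) (b := e 1) ?_ ?_ fun x y z hxy hxz hyz nxy nxz nyz =>
    not_indep_triple e hp hclaw hbull hodd hconn hxy hxz hyz nxy nxz nyz
  · simpa using antihole_ne_add_one e hp 0
  · simpa using antihole_not_adj_add_one e 0
end

section
/- Let G be a (bull, chair)-free graph containing an induced odd antihole with vertices v_1, …, v_p (p odd, p ≥ 5), where v_i and v_j are adjacent in G if and only if j ≢ i ± 1 (mod p). If a vertex w ∉ {v_1,…,v_p} is adjacent to at least one vertex of the antihole, then there is no index i such that both v_i and v_{i+1} (indices modulo p) are non-adjacent to w. -/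
/-!
Walking around the antihole from a pair of consecutive non-neighbours of `w` back to a neighbour
of `w` gives an index `j` with `w ∼ v_j` but `w ≁ v_{j+1}, v_{j+2}`. In the antihole, `v_j` sees
`v_{j+2}` and `v_{j+3}`, `v_{j+1}` sees `v_{j+3}`, and consecutive vertices are non-adjacent. If
`w ∼ v_{j+3}`, then `v_{j+2}, v_j, w, v_{j+3}, v_{j+1}` is a bull; otherwise `v_j` is the centre
of a chair with leaves `w`, `v_{j+2}` and the path `v_j v_{j+3} v_{j+1}`.
-/

open SimpleGraph Finset

section InducedPatterns

variable {V : Type*} {G : SimpleGraph V}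

lemma nonempty_bull_embedding_s6 {x y z u t : V}
    (hxy : G.Adj x y) (hyz : G.Adj y z) (hzu : G.Adj z u) (hut : G.Adj u t) (hyu : G.Adj y u)
    (hxz : ¬ G.Adj x z) (hxu : ¬ G.Adj x u) (hxt : ¬ G.Adj x t)
    (hyt : ¬ G.Adj y t) (hzt : ¬ G.Adj z t)
    (dxz : x ≠ z) (dxu : x ≠ u) (dxt : x ≠ t) (dyt : y ≠ t) (dzt : z ≠ t) :
    Nonempty (bull ↪g G) := by
  refine ⟨⟨⟨![x, y, z, u, t], fun a b h => ?_⟩, fun {a b} => ?_⟩⟩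
  · fin_cases a <;> fin_cases b <;>
      simp_all [eq_comm, hxy.ne, hyz.ne, hzu.ne, hut.ne, hyu.ne]
  · change G.Adj (![x, y, z, u, t] a) (![x, y, z, u, t] b) ↔ bull.Adj a b
    fin_cases a <;> fin_cases b <;> simp_all [bull, fromRel_adj, G.adj_comm]

lemma nonempty_chair_embedding {a b c d e : V}
    (hab : G.Adj a b) (hac : G.Adj a c) (had : G.Adj a d) (hde : G.Adj d e)
    (hbc : ¬ G.Adj b c) (hbd : ¬ G.Adj b d) (hbe : ¬ G.Adj b e)
    (hcd : ¬ G.Adj c d) (hce : ¬ G.Adj c e) (hae : ¬ G.Adj a e)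
    (dbc : b ≠ c) (dbd : b ≠ d) (dbe : b ≠ e) (dcd : c ≠ d) (dce : c ≠ e) (dae : a ≠ e) :
    Nonempty (chair ↪g G) := by
  refine ⟨⟨⟨![a, b, c, d, e], fun i j h => ?_⟩, fun {i j} => ?_⟩⟩
  · fin_cases i <;> fin_cases j <;> simp_all [eq_comm, hab.ne, hac.ne, had.ne, hde.ne]
  · change G.Adj (![a, b, c, d, e] i) (![a, b, c, d, e] j) ↔ chair.Adj i j
    fin_cases i <;> fin_cases j <;> simp_all [chair, fromRel_adj, G.adj_comm]

lemma nonempty_bull_or_chair_embedding {x₀ x₁ x₂ x₃ w : V}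
    (h02 : G.Adj x₀ x₂) (h03 : G.Adj x₀ x₃) (h13 : G.Adj x₁ x₃)
    (h01 : ¬ G.Adj x₀ x₁) (h12 : ¬ G.Adj x₁ x₂) (h23 : ¬ G.Adj x₂ x₃)
    (d01 : x₀ ≠ x₁) (d12 : x₁ ≠ x₂) (d23 : x₂ ≠ x₃)
    (hw0 : G.Adj w x₀) (hw1 : ¬ G.Adj w x₁) (hw2 : ¬ G.Adj w x₂)
    (dw1 : w ≠ x₁) (dw2 : w ≠ x₂) (dw3 : w ≠ x₃) :
    Nonempty (bull ↪g G) ∨ Nonempty (chair ↪g G) := by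
  by_cases hw3 : G.Adj w x₃
  · exact .inl <| nonempty_bull_embedding_s6 (x := x₂) (t := x₁) h02.symm hw0.symm hw3 h13.symm h03
      (fun h ↦ hw2 h.symm) h23 (fun h ↦ h12 h.symm) h01 hw1 dw2.symm d23 d12.symm d01 dw1
  · exact .inr <| nonempty_chair_embedding (a := x₀) (c := x₂) (e := x₁) hw0.symm h02 h03 h13.symm
      hw2 hw3 hw1 h23 (fun h ↦ h12 h.symm) h01 dw2 dw3 dw1 d23 d12.symm d01

end InducedPatterns

section CyclicOrder

open Fin.CommRing

variable {p : ℕ} [NeZero p]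

lemma Fin.exists_and_not_add_one {P : Fin p → Prop} {a b : Fin p} (ha : P a) (hb : ¬ P b) :
    ∃ j, P j ∧ ¬ P (j + 1) := by
  by_contra! hstep
  have hreach : ∀ n : ℕ, P (a + n) := by
    intro n
    induction n with
    | zero => simpa using ha
    | succ n ih => simpa [add_assoc] using hstep _ ih
  exact hb (by simpa using hreach (b - a).val)

lemma Fin.exists_and_not_add_one_and_not_add_two {P : Fin p → Prop} {a i : Fin p} (ha : P a)
    (hi : ¬ P i) (hi' : ¬ P (i + 1)) : ∃ j, P j ∧ ¬ P (j + 1) ∧ ¬ P (j + 2) := by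
  obtain ⟨j, hj, hj'⟩ := Fin.exists_and_not_add_one (P := fun k ↦ P k ∨ P (k + 1))
    (.inl ha) (not_or_intro hi hi')
  rw [not_or, add_assoc, one_add_one_eq_two] at hj'
  exact ⟨j, hj.resolve_right hj'.1, hj'⟩

lemma compl_cycleG_adj_self_add_iff (a d : Fin p) :
    (cycleG p)ᶜ.Adj a (a + d) ↔ d ≠ 0 ∧ d ≠ 1 ∧ d + 1 ≠ 0 := by
  simp only [compl_adj, cycleG, ne_eq, add_assoc, left_eq_add, add_eq_left, add_right_inj,
    eq_comm (a := (1 : Fin p))]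
  tauto

end CyclicOrder

section Antihole

open Fin.CommRing

variable {V : Type*} {G : SimpleGraph V} {p : ℕ} [NeZero p] {v : Fin p → V}

lemma not_adj_add_one_of_antihole (hv : ∀ i j, G.Adj (v i) (v j) ↔ (cycleG p)ᶜ.Adj i j)
    (a : Fin p) : ¬ G.Adj (v a) (v (a + 1)) := by
  rw [hv, compl_cycleG_adj_self_add_iff]
  exact fun h ↦ h.2.1 rfl

lemma adj_add_two_of_antihole (hp : 4 ≤ p) (hv : ∀ i j, G.Adj (v i) (v j) ↔ (cycleG p)ᶜ.Adj i j)
    (a : Fin p) : G.Adj (v a) (v (a + 2)) := by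
  rw [hv, compl_cycleG_adj_self_add_iff]
  norm_num [Fin.ext_iff, Fin.val_add, Nat.mod_eq_of_lt, show 1 < p by omega,
    show 2 < p by omega, show 3 < p by omega]

lemma adj_add_three_of_antihole (hp : 5 ≤ p) (hv : ∀ i j, G.Adj (v i) (v j) ↔ (cycleG p)ᶜ.Adj i j)
    (a : Fin p) : G.Adj (v a) (v (a + 3)) := by
  rw [hv, compl_cycleG_adj_self_add_iff]
  norm_num [Fin.ext_iff, Fin.val_add, Nat.mod_eq_of_lt, show 1 < p by omega,
    show 3 < p by omega, show 4 < p by omega]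

lemma nonempty_bull_or_chair_embedding_of_antihole (hp : 5 ≤ p) (hvinj : Function.Injective v)
    (hv : ∀ i j, G.Adj (v i) (v j) ↔ (cycleG p)ᶜ.Adj i j) {w : V} (hw : ∀ i, w ≠ v i) {j : Fin p}
    (h0 : G.Adj w (v j)) (h1 : ¬ G.Adj w (v (j + 1))) (h2 : ¬ G.Adj w (v (j + 2))) :
    Nonempty (bull ↪g G) ∨ Nonempty (chair ↪g G) := by
  have : Nontrivial (Fin p) := Fin.nontrivial_iff_two_le.2 (by omega)
  have hne (a : Fin p) : v a ≠ v (a + 1) := hvinj.ne (by simp)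
  have e2 : j + 2 = j + 1 + 1 := by ring
  have e3 : j + 3 = j + 2 + 1 := by ring
  have e3' : j + 3 = j + 1 + 2 := by ring
  refine nonempty_bull_or_chair_embedding (adj_add_two_of_antihole (by omega) hv j)
    (adj_add_three_of_antihole hp hv j) ?_ (not_adj_add_one_of_antihole hv j) ?_ ?_
    (hne j) ?_ ?_ h0 h1 h2 (hw _) (hw _) (hw _)
  · rw [e3']; exact adj_add_two_of_antihole (by omega) hv (j + 1)
  · rw [e2]; exact not_adj_add_one_of_antihole hv (j + 1)
  · rw [e3]; exact not_adj_add_one_of_antihole hv (j + 2)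
  · rw [e2]; exact hne (j + 1)
  · rw [e3]; exact hne (j + 2)

end Antihole

theorem no_two_consecutive_nonneighbors_general {V : Type*} (G : SimpleGraph V)
    (hbull : ¬ Nonempty (bull ↪g G)) (hchair : ¬ Nonempty (chair ↪g G))
    (p : ℕ) [NeZero p] (hp : 5 ≤ p)
    (v : Fin p → V) (hvinj : Function.Injective v)
    (hv : ∀ i j : Fin p, G.Adj (v i) (v j) ↔ ((cycleG p)ᶜ).Adj i j)
    (w : V) (hw : ∀ i, w ≠ v i) (hadj : ∃ i, G.Adj w (v i)) :
    ¬ ∃ i : Fin p, ¬ G.Adj w (v i) ∧ ¬ G.Adj w (v (i + 1)) := by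
  rintro ⟨i, hi, hi'⟩
  obtain ⟨a, ha⟩ := hadj
  obtain ⟨j, hj0, hj1, hj2⟩ :=
    Fin.exists_and_not_add_one_and_not_add_two (P := fun k ↦ G.Adj w (v k)) ha hi hi'
  rcases nonempty_bull_or_chair_embedding_of_antihole hp hvinj hv hw hj0 hj1 hj2 with h | h
  exacts [hbull h, hchair h]

theorem no_two_consecutive_nonneighbors {V : Type*} (G : SimpleGraph V)
    (hbull : ¬ Nonempty (bull ↪g G)) (hchair : ¬ Nonempty (chair ↪g G))
    (p : ℕ) [NeZero p] (hodd : Odd p) (hp : 5 ≤ p)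
    (v : Fin p → V) (hvinj : Function.Injective v)
    (hv : ∀ i j : Fin p, G.Adj (v i) (v j) ↔ ((cycleG p)ᶜ).Adj i j)
    (w : V) (hw : ∀ i, w ≠ v i) (hadj : ∃ i, G.Adj w (v i)) :
    ¬ ∃ i : Fin p, ¬ G.Adj w (v i) ∧ ¬ G.Adj w (v (i + 1)) :=
  no_two_consecutive_nonneighbors_general G hbull hchair p hp v hvinj hv w hw hadj
end

section
/- Let G be a (bull, claw, C_5)-free graph containing an induced odd antihole Q̄ isomorphic to C̄_7 with vertices v_1, …, v_7 (so v_i and v_j are adjacent in G if and only if j ≢ i ± 1 (mod 7)). If a vertex w ∉ Q̄ has exactly 5 neighbors in Q̄, then there exists an index i such that both v_i and v_{i+2} (indices modulo 7) are non-adjacent to w. -/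
open SimpleGraph Finset

/-! The vertex `w` misses exactly two vertices `v c`, `v (c + d)` of the antihole, and after
swapping them we may take `1 ≤ d ≤ 3`. For `d = 2` we are done. For `d = 1` the vertices
`v c, v (c + 2), w, v (c + 6), v (c + 1)` induce a bull, and for `d = 3` the vertices
`w, v (c + 2), v c, v (c + 3), v (c + 1)` induce a `C_5`. Both patterns are checked by computation
in the graph `Q̄ + w` on `Option (Fin 7)`; the maps into `G` are injective for free, because
distinct vertices of the bull and of `C_5` have distinct neighbourhoods. -/

open Function

instance (p : ℕ) [NeZero p] : DecidableRel (cycleG p).Adj :=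
  fun i j => inferInstanceAs (Decidable (i ≠ j ∧ (i + 1 = j ∨ j + 1 = i)))

instance : DecidableRel bull.Adj :=
  fun a b => inferInstanceAs (Decidable (a ≠ b ∧ _))

namespace SimpleGraph

variable {V W : Type*}

def addVertex (H : SimpleGraph W) (s : Set W) : SimpleGraph (Option W) where
  Adj
    | some x, some y => H.Adj x y
    | none, some y => y ∈ s
    | some x, none => x ∈ s
    | none, none => False
  symm := ⟨by
    rintro (_ | x) (_ | y) h
    exacts [h, h, h, h.symm]⟩
  loopless := ⟨by
    rintro (_ | x) h
    exacts [h, H.loopless.irrefl x h]⟩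

instance (H : SimpleGraph W) [DecidableRel H.Adj] (s : Set W) [DecidablePred (· ∈ s)] :
    DecidableRel (H.addVertex s).Adj
  | some x, some y => inferInstanceAs (Decidable (H.Adj x y))
  | none, some y => inferInstanceAs (Decidable (y ∈ s))
  | some x, none => inferInstanceAs (Decidable (x ∈ s))
  | none, none => inferInstanceAs (Decidable False)

lemma comap_optionElim (G : SimpleGraph V) (w : V) (v : W → V) :
    G.comap (fun o => o.elim w v) = (G.comap v).addVertex {i | G.Adj w (v i)} := by
  ext (_ | x) (_ | y) <;> simp [addVertex, adj_comm]

lemma neighborSet_injective_of_forall {H : SimpleGraph W}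
    (h : ∀ x y, (∀ z, H.Adj x z ↔ H.Adj y z) → x = y) : Injective H.neighborSet :=
  fun x y hxy => h x y fun z => Set.ext_iff.mp hxy z

lemma injective_of_comap_eq {G : SimpleGraph V} {H : SimpleGraph W} {f : W → V}
    (hH : Injective H.neighborSet) (hf : G.comap f = H) : Injective f := by
  subst hf
  intro x y hxy
  apply hH
  ext z
  simp [hxy]

lemma nonempty_embedding_of_comap_eq {G : SimpleGraph V} {H : SimpleGraph W} {f : W → V}
    (hH : Injective H.neighborSet) (hf : G.comap f = H) : Nonempty (H ↪g G) :=
  ⟨hf ▸ Embedding.comap ⟨f, injective_of_comap_eq hH hf⟩ G⟩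

end SimpleGraph

open SimpleGraph

lemma bull_neighborSet_injective : Injective bull.neighborSet :=
  neighborSet_injective_of_forall (by decide)

lemma cycleG_five_neighborSet_injective : Injective (cycleG 5).neighborSet :=
  neighborSet_injective_of_forall (by decide)

lemma bull_eq_comap_addVertex (c : Fin 7) :
    bull = (((cycleG 7)ᶜ).addVertex {c, c + 1}ᶜ).comap
      ![some c, some (c + 2), none, some (c + 6), some (c + 1)] := by
  ext x y
  revert c x y
  decide

lemma cycleG_five_eq_comap_addVertex (c : Fin 7) :
    cycleG 5 = (((cycleG 7)ᶜ).addVertex {c, c + 3}ᶜ).comap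
      ![none, some (c + 2), some c, some (c + 3), some (c + 1)] := by
  ext x y
  revert c x y
  decide

lemma Fin.exists_pair_eq_add_of_ne {n : ℕ} [NeZero n] {a b : Fin n} (hab : a ≠ b) :
    ∃ c d : Fin n, 0 < d.val ∧ 2 * d.val ≤ n ∧ ({a, b} : Set (Fin n)) = {c, c + d} := by
  have hd : b - a ≠ 0 := sub_ne_zero.mpr hab.symm
  have hd_pos : 0 < (b - a).val := Fin.pos_iff_ne_zero.mpr hd
  by_cases hle : 2 * (b - a).val ≤ n
  · exact ⟨a, b - a, hd_pos, hle, by rw [add_sub_cancel]⟩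
  · refine ⟨b, a - b, ?_, ?_, by rw [add_sub_cancel, Set.pair_comm]⟩
    all_goals
      rw [← neg_sub, Fin.val_neg, if_neg hd]
      omega

lemma Fin.exists_compl_eq_pair_add {n : ℕ} [NeZero n] {s : Set (Fin n)} (hs : s.ncard + 2 = n) :
    ∃ c d : Fin n, 0 < d.val ∧ 2 * d.val ≤ n ∧ sᶜ = {c, c + d} := by
  obtain ⟨a, b, hab, hs⟩ := Set.ncard_eq_two.mp <|
    Set.ncard_compl_of_ncard_eq_add s (by rw [Nat.card_eq_fintype_card, Fintype.card_fin]; omega)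
  exact hs ▸ Fin.exists_pair_eq_add_of_ne hab

theorem five_neighbors_on_C7bar_general {V : Type*} (G : SimpleGraph V)
    (hbull : ¬ Nonempty (bull ↪g G))
    (hC5 : ¬ Nonempty (cycleG 5 ↪g G))
    (v : Fin 7 → V)
    (hv : ∀ i j : Fin 7, G.Adj (v i) (v j) ↔ ((cycleG 7)ᶜ).Adj i j)
    (w : V)
    (hdeg : {i : Fin 7 | G.Adj w (v i)}.ncard = 5) :
    ∃ i : Fin 7, ¬ G.Adj w (v i) ∧ ¬ G.Adj w (v (i + 2)) := by
  obtain ⟨c, d, hd_pos, hd_le, hnon⟩ :=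
    Fin.exists_compl_eq_pair_add (s := {i | G.Adj w (v i)}) (by rw [hdeg])
  have hQ : G.comap v = (cycleG 7)ᶜ := by
    ext i j
    exact hv i j
  have hP : G.comap (fun o => o.elim w v) = ((cycleG 7)ᶜ).addVertex {c, c + d}ᶜ := by
    rw [comap_optionElim, ← hnon, compl_compl, hQ]
  have hd : ∀ d : Fin 7, 0 < d.val → 2 * d.val ≤ 7 → d = 1 ∨ d = 2 ∨ d = 3 := by decide
  obtain rfl | rfl | rfl := hd d hd_pos hd_le
  · have hB := bull_eq_comap_addVertex c
    rw [← hP, comap_comap] at hB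
    exact (hbull (nonempty_embedding_of_comap_eq bull_neighborSet_injective hB.symm)).elim
  · have hc : c ∈ ({c, c + 2} : Set (Fin 7)) := Set.mem_insert c _
    have hc2 : c + 2 ∈ ({c, c + 2} : Set (Fin 7)) := Set.mem_insert_of_mem c rfl
    rw [← hnon] at hc hc2
    exact ⟨c, hc, hc2⟩
  · have hC := cycleG_five_eq_comap_addVertex c
    rw [← hP, comap_comap] at hC
    exact (hC5 (nonempty_embedding_of_comap_eq cycleG_five_neighborSet_injective hC.symm)).elim

theorem five_neighbors_on_C7bar {V : Type*} (G : SimpleGraph V)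
    (hbull : ¬ Nonempty (bull ↪g G)) (hclaw : ¬ Nonempty (claw ↪g G))
    (hC5 : ¬ Nonempty (cycleG 5 ↪g G))
    (v : Fin 7 → V) (hvinj : Function.Injective v)
    (hv : ∀ i j : Fin 7, G.Adj (v i) (v j) ↔ ((cycleG 7)ᶜ).Adj i j)
    (w : V) (hw : ∀ i, w ≠ v i)
    (hdeg : {i : Fin 7 | G.Adj w (v i)}.ncard = 5) :
    ∃ i : Fin 7, ¬ G.Adj w (v i) ∧ ¬ G.Adj w (v (i + 2)) :=
  five_neighbors_on_C7bar_general G hbull hC5 v hv w hdeg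
end
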